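/- Let w₁,…,w_k be pairwise commuting nilpotent h×h complex matrices. Then there exists a constant C > 0 such that for every tuple of integers (d₁,…,d_k) ∈ ℤ^k and every ℏ ∈ ℂ with |ℏ| = 1: all the matrices w_i + mℏ with m a nonzero integer are invertible, and the matrix I(d, ℏ) := Π_{i : d_i < 0} Π_{m = d_i + 1}^{0} (w_i + mℏ) · Π_{i : d_i ≥ 0} ( Π_{m=1}^{d_i} (w_i + mℏ) )^{−1} satisfies ‖I(d, ℏ)‖ ≤ C^{Σ_i |d_i|} · (1/D!) if D ≥ 0 and ‖I(d, ℏ)‖ ≤ C^{Σ_i |d_i|} · (−D)! if D ≤ 0, where D = d₁ + ⋯ + d_k and ‖·‖ is the operator norm. -/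

import Mathlib

open scoped BigOperators Matrix.Norms.L2Operator

/-- The coefficient `I(d, ℏ)` of the `I`-function of a toric variety:
`I(d,ℏ) = ∏_{i : d_i < 0} ∏_{m = d_i+1}^{0} (w_i + mℏ) ⬝
∏_{i : d_i ≥ 0} (∏_{m=1}^{d_i} (w_i + mℏ))⁻¹`.  Since all factors commute, the products
(taken here in the order of the indices) are unambiguous. -/
noncomputable def IFunCoeff (k h : ℕ) (w : Fin k → Matrix (Fin h) (Fin h) ℂ)
    (d : Fin k → ℤ) (z : ℂ) : Matrix (Fin h) (Fin h) ℂ :=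
  (List.ofFn (fun i : Fin k =>
    if d i < 0 then
      ((List.range (d i).natAbs).map (fun j =>
        w i + ((d i + 1 + (j : ℤ) : ℤ) : ℂ) • z • (1 : Matrix (Fin h) (Fin h) ℂ))).prod
    else 1)).prod *
  (List.ofFn (fun i : Fin k =>
    if 0 ≤ d i then
      (((List.range (d i).toNat).map (fun m =>
        w i + (((m + 1 : ℕ)) : ℂ) • z • (1 : Matrix (Fin h) (Fin h) ℂ))).prod)⁻¹
    else 1)).prod

/-!
For `d < 0` the factors of the `i`-th block satisfy `‖w + mℏ‖ ≤ (‖w‖ + 1)(|m| + 1)`, so the block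
has norm at most `(‖w‖ + 1)^{|d|} |d|!`. For `d ≥ 0`, the Neumann series of the nilpotent `w / (mℏ)`
is a finite sum, giving `‖(w + mℏ)⁻¹‖ ≤ K / m` with `K = ∑_{j < n} ‖w‖^j` when `w^n = 0`, and a
block of norm at most `K^d / d!`. With `B` above all these constants and
`φ(d) = 1/d!` for `d ≥ 0` and `φ(d) = (-d)!` for `d ≤ 0`, each block is thus bounded by
`B^{|d|} φ(d)`, and `φ(a) φ(b) ≤ 2^{|a| + |b|} φ(a + b)` because binomial coefficients are at most
`2^n`. Iterating over the `k` indices gives `‖I(d, ℏ)‖ ≤ (2^k B)^{∑|d_i|} φ(D)`.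
-/

open Finset Filter

open scoped Nat

lemma Nat.factorial_add_le_two_pow_mul (m n : ℕ) : (m + n)! ≤ 2 ^ (m + n) * (m ! * n !) := by
  rw [← Nat.add_choose_mul_factorial_mul_factorial, mul_assoc]
  exact Nat.mul_le_mul_right _ (Nat.choose_le_two_pow _ _)

lemma Nat.factorial_mul_factorial_le_factorial_add (m n : ℕ) : m ! * n ! ≤ (m + n)! :=
  Nat.le_of_dvd (Nat.factorial_pos _) (Nat.factorial_mul_factorial_dvd_factorial_add m n)

noncomputable def factorialWeight (d : ℤ) : ℝ := if 0 ≤ d then ((d.toNat)! : ℝ)⁻¹ else (d.natAbs)!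

lemma factorialWeight_of_nonneg {d : ℤ} (hd : 0 ≤ d) : factorialWeight d = ((d.toNat)! : ℝ)⁻¹ :=
  if_pos hd

lemma factorialWeight_of_nonpos {d : ℤ} (hd : d ≤ 0) : factorialWeight d = (d.natAbs)! := by
  rcases hd.lt_or_eq with hd | rfl
  · exact if_neg hd.not_ge
  · simp [factorialWeight]

lemma factorialWeight_natCast (n : ℕ) : factorialWeight n = (n ! : ℝ)⁻¹ := by
  simp [factorialWeight_of_nonneg]

lemma factorialWeight_neg_natCast (n : ℕ) : factorialWeight (-n) = n ! := by
  simp [factorialWeight_of_nonpos]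

lemma factorialWeight_nonneg (d : ℤ) : 0 ≤ factorialWeight d := by
  unfold factorialWeight; split_ifs <;> positivity

lemma factorialWeight_natCast_mul_neg_le (m n : ℕ) :
    factorialWeight m * factorialWeight (-n) ≤ 2 ^ (m + n) * factorialWeight (m - n) := by
  rw [factorialWeight_natCast, factorialWeight_neg_natCast]
  rcases le_total n m with h | h
  · obtain ⟨r, rfl⟩ := Nat.exists_eq_add_of_le h
    have key : (n ! * r ! : ℝ) ≤ (n + r)! := by
      exact_mod_cast Nat.factorial_mul_factorial_le_factorial_add n r
    rw [show ((n + r : ℕ) : ℤ) - n = r by push_cast; ring, factorialWeight_natCast]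
    calc ((n + r)! : ℝ)⁻¹ * n ! ≤ (r ! : ℝ)⁻¹ := by field_simp; linarith
      _ ≤ _ := le_mul_of_one_le_left (by positivity) (one_le_pow₀ one_le_two)
  · obtain ⟨r, rfl⟩ := Nat.exists_eq_add_of_le h
    have key : ((m + r)! : ℝ) ≤ 2 ^ (m + r) * (m ! * r !) := by
      exact_mod_cast Nat.factorial_add_le_two_pow_mul m r
    rw [show (m : ℤ) - (m + r : ℕ) = -r by push_cast; ring, factorialWeight_neg_natCast]
    have hpow : (2 : ℝ) ^ (m + r) * (m ! * r !) ≤ 2 ^ (m + (m + r)) * (m ! * r !) := by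
      gcongr <;> norm_num
    field_simp
    linarith

lemma factorialWeight_mul_le (a b : ℤ) :
    factorialWeight a * factorialWeight b
      ≤ 2 ^ (a.natAbs + b.natAbs) * factorialWeight (a + b) := by
  obtain ⟨m, rfl | rfl⟩ := Int.eq_nat_or_neg a <;> obtain ⟨n, rfl | rfl⟩ := Int.eq_nat_or_neg b
  · rw [factorialWeight_natCast, factorialWeight_natCast, ← Nat.cast_add, factorialWeight_natCast]
    have key : ((m + n)! : ℝ) ≤ 2 ^ (m + n) * (m ! * n !) := by
      exact_mod_cast Nat.factorial_add_le_two_pow_mul m n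
    simp only [Int.natAbs_natCast]
    field_simp
    linarith
  · simpa [sub_eq_add_neg] using factorialWeight_natCast_mul_neg_le m n
  · simpa [mul_comm, add_comm, sub_eq_add_neg] using factorialWeight_natCast_mul_neg_le n m
  · rw [factorialWeight_neg_natCast, factorialWeight_neg_natCast, ← neg_add, ← Nat.cast_add,
      factorialWeight_neg_natCast]
    have key : (m ! * n ! : ℝ) ≤ (m + n)! := by
      exact_mod_cast Nat.factorial_mul_factorial_le_factorial_add m n
    simpa using key.trans
      (le_mul_of_one_le_left (by positivity) (one_le_pow₀ (one_le_two (α := ℝ))))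

lemma prod_factorialWeight_le {ι : Type*} (s : Finset ι) (d : ι → ℤ) :
    ∏ i ∈ s, factorialWeight (d i)
      ≤ 2 ^ (#s * ∑ i ∈ s, (d i).natAbs) * factorialWeight (∑ i ∈ s, d i) := by
  classical
  induction s using Finset.induction with
  | empty => simp [factorialWeight]
  | insert a s ha ih =>
    rw [prod_insert ha, sum_insert ha, sum_insert ha, card_insert_of_notMem ha]
    set S := ∑ i ∈ s, (d i).natAbs
    have hsum : (∑ i ∈ s, d i).natAbs ≤ S := Int.natAbs_sum_le s d
    calc factorialWeight (d a) * ∏ i ∈ s, factorialWeight (d i)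
        ≤ factorialWeight (d a) * (2 ^ (#s * S) * factorialWeight (∑ i ∈ s, d i)) := by
          gcongr; exact factorialWeight_nonneg _
      _ = 2 ^ (#s * S) * (factorialWeight (d a) * factorialWeight (∑ i ∈ s, d i)) := by ring
      _ ≤ 2 ^ (#s * S) * (2 ^ ((d a).natAbs + (∑ i ∈ s, d i).natAbs) *
            factorialWeight (d a + ∑ i ∈ s, d i)) :=
          mul_le_mul_of_nonneg_left (factorialWeight_mul_le _ _) (by positivity)
      _ ≤ _ := by
          rw [← mul_assoc, ← pow_add]
          gcongr
          · exact factorialWeight_nonneg _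
          · exact one_le_two
          · nlinarith [Nat.zero_le (#s * (d a).natAbs)]

section Algebra

variable {𝕜 R : Type*} [Field 𝕜] [Ring R] [Algebra 𝕜 R]

lemma IsNilpotent.isUnit_add_smul_one {u : R} (hu : IsNilpotent u) {c : 𝕜} (hc : c ≠ 0) :
    IsUnit (u + c • (1 : R)) := by
  rw [← Algebra.algebraMap_eq_smul_one]
  exact hu.isUnit_add_right_of_commute ((Units.mk0 c hc).isUnit.map _) (Algebra.commutes c u).symm

lemma ringInverse_add_smul_one_of_pow_eq_zero {u : R} {n : ℕ} (hu : u ^ n = 0) {c : 𝕜}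
    (hc : c ≠ 0) :
    Ring.inverse (u + c • (1 : R)) = c⁻¹ • ∑ j ∈ range n, (-(c⁻¹ • u)) ^ j := by
  have hunit := IsNilpotent.isUnit_add_smul_one ⟨n, hu⟩ hc
  have hfactor : u + c • (1 : R) = c • (1 - -(c⁻¹ • u)) := by
    rw [smul_sub, smul_neg, smul_smul, mul_inv_cancel₀ hc, one_smul, sub_neg_eq_add, add_comm]
  have hright : (u + c • (1 : R)) * (c⁻¹ • ∑ j ∈ range n, (-(c⁻¹ • u)) ^ j) = 1 := by
    rw [hfactor, smul_mul_smul_comm, mul_inv_cancel₀ hc, one_smul, mul_neg_geom_sum, neg_pow,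
      smul_pow, hu, smul_zero, mul_zero, sub_zero]
  simpa using (Ring.inverse_mul_eq_iff_eq_mul _ 1 _ hunit).2 hright.symm

end Algebra

lemma Ring.inverse_list_prod {M₀ : Type*} [MonoidWithZero M₀] :
    ∀ {l : List M₀}, (∀ a ∈ l, IsUnit a) → Ring.inverse l.prod = (l.reverse.map Ring.inverse).prod
  | [], _ => by simp
  | a :: l, hl => by
    rw [List.prod_cons, Ring.inverse_mul (.inl (hl a List.mem_cons_self)),
      Ring.inverse_list_prod fun b hb => hl b (List.mem_cons_of_mem a hb)]
    simp

lemma List.prod_map_range {M : Type*} [CommMonoid M] (f : ℕ → M) (n : ℕ) :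
    ((List.range n).map f).prod = ∏ j ∈ Finset.range n, f j := by
  simp [Finset.prod_eq_multiset_prod, Finset.range_val, Multiset.range]

section IFunFactor

variable {𝕜 R : Type*} [Ring 𝕜] [Ring R] [Module 𝕜 R]

-- The `i`-th factors of the two products defining `IFunCoeff`, for an arbitrary algebra in
-- place of the matrices and with `Ring.inverse` in place of the matrix inverse.

def IFunNegFactor (u : R) (d : ℤ) (z : 𝕜) : R :=
  if d < 0 then
    ((List.range d.natAbs).map fun j : ℕ => u + ((d + 1 + j : ℤ) : 𝕜) • z • (1 : R)).prod
  else 1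

noncomputable def IFunPosFactor (u : R) (d : ℤ) (z : 𝕜) : R :=
  if 0 ≤ d then
    Ring.inverse ((List.range d.toNat).map fun m : ℕ => u + ((m + 1 : ℕ) : 𝕜) • z • (1 : R)).prod
  else 1

end IFunFactor

section NormedAlgebra

variable {𝕜 R : Type*} [RCLike 𝕜] [NormedRing R] [NormOneClass R] [NormedAlgebra 𝕜 R]

lemma norm_list_prod_map_range_le (f : ℕ → R) (n : ℕ) :
    ‖((List.range n).map f).prod‖ ≤ ∏ j ∈ range n, ‖f j‖ := by
  refine (List.norm_prod_le _).trans_eq ?_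
  rw [List.map_map, List.prod_map_range]
  rfl

lemma norm_list_prod_ofFn_le {k : ℕ} (f : Fin k → R) : ‖(List.ofFn f).prod‖ ≤ ∏ i, ‖f i‖ := by
  refine (List.norm_prod_le _).trans_eq ?_
  rw [List.map_ofFn, List.prod_ofFn]
  rfl

lemma norm_add_smul_one_le (u : R) (c : 𝕜) : ‖u + c • (1 : R)‖ ≤ ‖u‖ + ‖c‖ := by
  simpa [norm_smul] using norm_add_le u (c • (1 : R))

lemma norm_ringInverse_add_smul_one_le {u : R} {n : ℕ} (hu : u ^ n = 0) {c : 𝕜} (hc : 1 ≤ ‖c‖) :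
    ‖Ring.inverse (u + c • (1 : R))‖ ≤ (∑ j ∈ range n, ‖u‖ ^ j) / ‖c‖ := by
  have hc₀ : c ≠ 0 := norm_pos_iff.1 (one_pos.trans_le hc)
  rw [ringInverse_add_smul_one_of_pow_eq_zero hu hc₀, norm_smul, norm_inv, inv_mul_eq_div]
  gcongr
  refine (norm_sum_le _ _).trans (sum_le_sum fun j _ => (norm_pow_le _ j).trans ?_)
  gcongr
  rw [norm_neg, norm_smul, norm_inv]
  exact mul_le_of_le_one_left (norm_nonneg u) (inv_le_one_of_one_le₀ hc)

lemma norm_prod_range_add_intCast_smul_le (u : R) {z : 𝕜} (hz : ‖z‖ ≤ 1) {d : ℤ} (hd : d ≤ 0) :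
    ‖((List.range d.natAbs).map fun j : ℕ => u + ((d + 1 + j : ℤ) : 𝕜) • z • (1 : R)).prod‖
      ≤ (‖u‖ + 1) ^ d.natAbs * d.natAbs ! := by
  obtain ⟨n, rfl⟩ := Int.exists_eq_neg_ofNat hd
  rw [Int.natAbs_neg, Int.natAbs_natCast]
  refine (norm_list_prod_map_range_le _ n).trans ?_
  calc ∏ j ∈ range n, ‖u + ((-n + 1 + j : ℤ) : 𝕜) • z • (1 : R)‖
      ≤ ∏ j ∈ range n, (‖u‖ + 1) * (((n - 1 - j : ℕ) : ℝ) + 1) := by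
        gcongr with j hj
        have hj : -(n : ℤ) + 1 + j = -((n - 1 - j : ℕ) : ℤ) := by
          have := mem_range.1 hj; omega
        rw [smul_smul, hj]
        refine (norm_add_smul_one_le u _).trans ?_
        rw [norm_mul, Int.cast_neg, Int.cast_natCast, norm_neg, RCLike.norm_natCast]
        have := mul_le_of_le_one_right (Nat.cast_nonneg (α := ℝ) (n - 1 - j)) hz
        nlinarith [norm_nonneg u, Nat.cast_nonneg (α := ℝ) (n - 1 - j)]
    _ = (‖u‖ + 1) ^ n * n ! := by
        rw [prod_mul_distrib, prod_const, card_range,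
          prod_range_reflect (fun j => (j : ℝ) + 1) n]
        congr 1
        exact_mod_cast prod_range_add_one_eq_factorial n

lemma norm_ringInverse_prod_range_add_natCast_smul_le {u : R} {n : ℕ} (hu : u ^ n = 0) {z : 𝕜}
    (hz : 1 ≤ ‖z‖) (m : ℕ) :
    ‖Ring.inverse ((List.range m).map fun j : ℕ => u + ((j + 1 : ℕ) : 𝕜) • z • (1 : R)).prod‖
      ≤ (∑ j ∈ range n, ‖u‖ ^ j) ^ m / m ! := by
  have hnorm (j : ℕ) : (j + 1 : ℝ) ≤ ‖((j + 1 : ℕ) : 𝕜) * z‖ := by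
    rw [norm_mul, RCLike.norm_natCast]; push_cast
    exact le_mul_of_one_le_right (by positivity) hz
  have hunit : ∀ a ∈ (List.range m).map fun j : ℕ => u + ((j + 1 : ℕ) : 𝕜) • z • (1 : R),
      IsUnit a := by
    simp only [List.mem_map, forall_exists_index, and_imp, forall_apply_eq_imp_iff₂]
    intro j _
    rw [smul_smul]
    exact IsNilpotent.isUnit_add_smul_one ⟨n, hu⟩
      (norm_pos_iff.1 (lt_of_lt_of_le (by positivity) (hnorm j)))
  rw [Ring.inverse_list_prod hunit]
  refine (List.norm_prod_le _).trans ?_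
  rw [List.map_reverse, List.map_reverse, List.prod_reverse, List.map_map, List.map_map,
    List.prod_map_range]
  calc ∏ j ∈ range m, ‖Ring.inverse (u + ((j + 1 : ℕ) : 𝕜) • z • (1 : R))‖
      ≤ ∏ j ∈ range m, (∑ i ∈ range n, ‖u‖ ^ i) / (j + 1) := by
        gcongr with j
        rw [smul_smul]
        have hj : (1 : ℝ) ≤ ‖((j + 1 : ℕ) : 𝕜) * z‖ :=
          (le_add_of_nonneg_left j.cast_nonneg).trans (hnorm j)
        refine (norm_ringInverse_add_smul_one_le hu hj).trans ?_
        gcongr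
        exact hnorm j
    _ = (∑ j ∈ range n, ‖u‖ ^ j) ^ m / m ! := by
        rw [prod_div_distrib, prod_const, card_range]
        congr 1
        exact_mod_cast prod_range_add_one_eq_factorial m

lemma IsNilpotent.eventually_norm_IFunFactor_le {u : R} (hu : IsNilpotent u) :
    ∀ᶠ B in atTop, ∀ z : 𝕜, ‖z‖ = 1 → ∀ d : ℤ,
      ‖IFunNegFactor u d z‖ * ‖IFunPosFactor u d z‖ ≤ B ^ d.natAbs * factorialWeight d := by
  obtain ⟨n, hn⟩ := hu
  filter_upwards [eventually_ge_atTop (‖u‖ + 1), eventually_ge_atTop (∑ j ∈ range n, ‖u‖ ^ j)]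
    with B hB₁ hB₂ z hz d
  rcases lt_or_ge d 0 with hd | hd
  · rw [IFunNegFactor, IFunPosFactor, if_pos hd, if_neg hd.not_ge, norm_one, mul_one,
      factorialWeight_of_nonpos hd.le]
    refine (norm_prod_range_add_intCast_smul_le u hz.le hd.le).trans ?_
    gcongr
  · rw [IFunNegFactor, IFunPosFactor, if_neg hd.not_gt, if_pos hd, norm_one, one_mul,
      factorialWeight_of_nonneg hd, ← div_eq_mul_inv, show d.natAbs = d.toNat by omega]
    refine (norm_ringInverse_prod_range_add_natCast_smul_le hn hz.ge d.toNat).trans ?_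
    gcongr

theorem exists_norm_prod_IFunFactor_le {k : ℕ} {w : Fin k → R} (hw : ∀ i, IsNilpotent (w i)) :
    ∃ C : ℝ, 0 < C ∧ ∀ (d : Fin k → ℤ) (z : 𝕜), ‖z‖ = 1 →
      ‖(List.ofFn fun i => IFunNegFactor (w i) (d i) z).prod *
          (List.ofFn fun i => IFunPosFactor (w i) (d i) z).prod‖
        ≤ C ^ (∑ i, (d i).natAbs) * factorialWeight (∑ i, d i) := by
  obtain ⟨B, hB₀, hB⟩ := ((eventually_gt_atTop 0).and
    (eventually_all.2 fun i => (hw i).eventually_norm_IFunFactor_le (𝕜 := 𝕜))).exists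
  refine ⟨2 ^ k * B, by positivity, fun d z hz => ?_⟩
  calc _ ≤ (∏ i, ‖IFunNegFactor (w i) (d i) z‖) * ∏ i, ‖IFunPosFactor (w i) (d i) z‖ :=
        (norm_mul_le _ _).trans (by gcongr <;> exact norm_list_prod_ofFn_le _)
    _ ≤ ∏ i, B ^ (d i).natAbs * factorialWeight (d i) := by
        rw [← prod_mul_distrib]
        exact prod_le_prod (fun i _ => by positivity) fun i _ => hB i z hz (d i)
    _ ≤ B ^ (∑ i, (d i).natAbs) *
          (2 ^ (k * ∑ i, (d i).natAbs) * factorialWeight (∑ i, d i)) := by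
        rw [prod_mul_distrib, prod_pow_eq_pow_sum]
        gcongr
        simpa using prod_factorialWeight_le univ d
    _ = (2 ^ k * B) ^ (∑ i, (d i).natAbs) * factorialWeight (∑ i, d i) := by
        rw [mul_pow, pow_mul]; ring

end NormedAlgebra

lemma IFunCoeff_eq (k h : ℕ) (w : Fin k → Matrix (Fin h) (Fin h) ℂ) (d : Fin k → ℤ) (z : ℂ) :
    IFunCoeff k h w d z = (List.ofFn fun i => IFunNegFactor (w i) (d i) z).prod *
      (List.ofFn fun i => IFunPosFactor (w i) (d i) z).prod := by
  simp [IFunCoeff, IFunNegFactor, IFunPosFactor, ← List.map_eq_flatMap, List.map_map,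
    Function.comp_def, Matrix.nonsing_inv_eq_ringInverse]

theorem IFunction_coefficient_estimate_general (k h : ℕ)
    (w : Fin k → Matrix (Fin h) (Fin h) ℂ)
    (hnil : ∀ i, IsNilpotent (w i)) :
    ∃ C : ℝ, 0 < C ∧ ∀ (d : Fin k → ℤ) (z : ℂ), ‖z‖ = 1 →
      (∀ (i : Fin k) (m : ℤ), m ≠ 0 →
        IsUnit (w i + ((m : ℤ) : ℂ) • z • (1 : Matrix (Fin h) (Fin h) ℂ))) ∧
      (0 ≤ ∑ i, d i →
        ‖IFunCoeff k h w d z‖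
          ≤ C ^ (∑ i, (d i).natAbs) / (Nat.factorial (∑ i, d i).toNat : ℝ)) ∧
      ((∑ i, d i) ≤ 0 →
        ‖IFunCoeff k h w d z‖
          ≤ C ^ (∑ i, (d i).natAbs) * (Nat.factorial (∑ i, d i).natAbs : ℝ)) := by
  obtain ⟨C, hC, hbound⟩ : ∃ C : ℝ, 0 < C ∧ ∀ (d : Fin k → ℤ) (z : ℂ), ‖z‖ = 1 →
      ‖IFunCoeff k h w d z‖ ≤ C ^ (∑ i, (d i).natAbs) * factorialWeight (∑ i, d i) := by
    rcases isEmpty_or_nonempty (Fin h) with _ | _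
    · refine ⟨1, one_pos, fun d z _ => ?_⟩
      rw [Subsingleton.elim (IFunCoeff k h w d z) 0, norm_zero]
      exact mul_nonneg (by positivity) (factorialWeight_nonneg _)
    · simpa only [IFunCoeff_eq] using exists_norm_prod_IFunFactor_le hnil
  refine ⟨C, hC, fun d z hz => ⟨fun i m hm => ?_, fun hD => ?_, fun hD => ?_⟩⟩
  · rw [smul_smul]
    exact (hnil i).isUnit_add_smul_one
      (mul_ne_zero (Int.cast_ne_zero.2 hm) (norm_ne_zero_iff.1 (hz ▸ one_ne_zero)))
  · simpa only [factorialWeight_of_nonneg hD, ← div_eq_mul_inv] using hbound d z hz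
  · simpa only [factorialWeight_of_nonpos hD] using hbound d z hz

/-- Let `w₁, …, w_k` be pairwise commuting nilpotent `h × h` complex
matrices.  Then there is `C > 0` such that for all `d ∈ ℤ^k` and all `ℏ` with `|ℏ| = 1`, all
matrices `w_i + mℏ` (`m` a nonzero integer) are invertible and the `I`-function coefficient
satisfies `‖I(d,ℏ)‖ ≤ C^{∑|d_i|}/D!` if `D ≥ 0` and `‖I(d,ℏ)‖ ≤ C^{∑|d_i|} (-D)!` if
`D ≤ 0`, where `D = ∑ d_i` and `‖·‖` is the operator norm. -/
theorem IFunction_coefficient_estimate (k h : ℕ)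
    (w : Fin k → Matrix (Fin h) (Fin h) ℂ)
    (hcomm : ∀ i j, Commute (w i) (w j)) (hnil : ∀ i, IsNilpotent (w i)) :
    ∃ C : ℝ, 0 < C ∧ ∀ (d : Fin k → ℤ) (z : ℂ), ‖z‖ = 1 →
      (∀ (i : Fin k) (m : ℤ), m ≠ 0 →
        IsUnit (w i + ((m : ℤ) : ℂ) • z • (1 : Matrix (Fin h) (Fin h) ℂ))) ∧
      (0 ≤ ∑ i, d i →
        ‖IFunCoeff k h w d z‖
          ≤ C ^ (∑ i, (d i).natAbs) / (Nat.factorial (∑ i, d i).toNat : ℝ)) ∧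
      ((∑ i, d i) ≤ 0 →
        ‖IFunCoeff k h w d z‖
          ≤ C ^ (∑ i, (d i).natAbs) * (Nat.factorial (∑ i, d i).natAbs : ℝ)) :=
  IFunction_coefficient_estimate_general k h w hnil
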